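/- Let A be a finite dimensional k-algebra and α : A⊗A → A* a Hochschild 2-cocycle such that the bilinear form (a,b) ↦ α(a⊗b)(1) − α(b⊗a)(1) vanishes on all commutators, i.e., there exists h ∈ A* with α(a⊗b)(1) − α(b⊗a)(1) + h(ab − ba) = 0 for all a,b ∈ A. Then T(A,α) is a symmetric algebra. -/

import Mathlib

namespace HochschildExtension

variable (k : Type*) [Field k] (A : Type*) [Ring A] [Algebra k A]

/-- The underlying vector space `A ⊕ A*` of the Hochschild extension `T(A,α)`. -/
abbrev Ext : Type _ := A × Module.Dual k A

/-- The Hochschild 2-cocycle condition for `α : A ⊗ A → A*`, written pointwise using the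
dual bimodule structure `(c·f·a)(b) = f(abc)`, i.e. `(a·g)(x) = g(xa)`, `(f·b)(x) = f(bx)`. -/
def IsCocycle (α : A →ₗ[k] A →ₗ[k] Module.Dual k A) : Prop :=
  ∀ a b d x : A, α b d (x * a) - α (a * b) d x + α a (b * d) x - α a b (d * x) = 0

/-- The multiplication of the Hochschild extension `T(A,α)`:
`(a,f)(b,g) = (ab, a·g + f·b + α(a⊗b))`, where `(a·g)(x) = g(xa)` and `(f·b)(x) = f(bx)`. -/
noncomputable def hmul (α : A →ₗ[k] A →ₗ[k] Module.Dual k A) (p q : Ext k A) : Ext k A :=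
  (p.1 * q.1,
    q.2 ∘ₗ LinearMap.mulRight k p.1 + p.2 ∘ₗ LinearMap.mulLeft k q.1 + α p.1 q.1)

/-- The identity element `(1, -α(1⊗1))` of the Hochschild extension `T(A,α)`. -/
noncomputable def hone (α : A →ₗ[k] A →ₗ[k] Module.Dual k A) : Ext k A :=
  (1, -(α 1 1))

/-- `T(A,α)` is a symmetric algebra: there is a `k`-linear bijection
`φ : T(A,α) → T(A,α)*` which is a morphism of `T(A,α)`-bimodules, where `T(A,α)*`
carries the canonical bimodule structure `(t·ξ·s)(u) = ξ(sut)`. -/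
noncomputable def IsSymmetric (α : A →ₗ[k] A →ₗ[k] Module.Dual k A) : Prop :=
  ∃ φ : Ext k A ≃ₗ[k] Module.Dual k (Ext k A),
    ∀ x y u : Ext k A,
      φ (hmul k A α x y) u = φ x (hmul k A α y u) ∧
      φ (hmul k A α y x) u = φ x (hmul k A α u y)

/-! The symmetrizing form is `θ(a, f) = h(a) + f(1)`. Associativity of `T(A,α)` is the cocycle
condition, and the hypothesis on `h` says exactly that `θ(xy) = θ(yx)`; hence
`φ(x)(u) = θ(xu)` is a bimodule map `T(A,α) → T(A,α)*`. It is bijective because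
`φ(a, f)(b, g) = g(a) + f(b) + α(a⊗b)(1) + h(ab)` is the canonical pairing of `A × A*`
precomposed with the triangular shear `(a, f) ↦ (a, f + β a)`, where `β a = α(a⊗-)(1) + h(a-)`. -/

section SymmetrizingForm

variable {k A}

theorem hmul_assoc (α : A →ₗ[k] A →ₗ[k] Module.Dual k A) (hα : IsCocycle k A α)
    (x y z : Ext k A) :
    hmul k A α (hmul k A α x y) z = hmul k A α x (hmul k A α y z) := by
  obtain ⟨a, f⟩ := x
  obtain ⟨b, g⟩ := y
  obtain ⟨d, e⟩ := z
  refine Prod.ext (mul_assoc a b d) (LinearMap.ext fun t => ?_)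
  have hc := hα a b d t
  simp only [hmul, LinearMap.add_apply, LinearMap.comp_apply, LinearMap.mulRight_apply,
    LinearMap.mulLeft_apply]
  rw [mul_assoc t a b, mul_assoc d t a, mul_assoc b d t] at *
  linear_combination -hc

noncomputable def symmetrizingForm (h : Module.Dual k A) : Module.Dual k (Ext k A) :=
  h ∘ₗ LinearMap.fst k A (Module.Dual k A) +
    Module.Dual.eval k A 1 ∘ₗ LinearMap.snd k A (Module.Dual k A)

theorem symmetrizingForm_hmul (α : A →ₗ[k] A →ₗ[k] Module.Dual k A) (h : Module.Dual k A)
    (x y : Ext k A) :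
    symmetrizingForm h (hmul k A α x y) = y.2 x.1 + x.2 y.1 + α x.1 y.1 1 + h (x.1 * y.1) := by
  simp only [symmetrizingForm, hmul, LinearMap.add_apply, LinearMap.comp_apply,
    LinearMap.fst_apply, LinearMap.snd_apply, Module.Dual.eval_apply, LinearMap.mulRight_apply,
    LinearMap.mulLeft_apply, one_mul, mul_one]
  ring

theorem symmetrizingForm_hmul_comm (α : A →ₗ[k] A →ₗ[k] Module.Dual k A) (h : Module.Dual k A)
    (H : ∀ a b : A, α a b 1 - α b a 1 + h (a * b - b * a) = 0) (x y : Ext k A) :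
    symmetrizingForm h (hmul k A α x y) = symmetrizingForm h (hmul k A α y x) := by
  have hxy := H x.1 y.1
  rw [map_sub] at hxy
  rw [symmetrizingForm_hmul, symmetrizingForm_hmul]
  linear_combination hxy

noncomputable def shearMap (α : A →ₗ[k] A →ₗ[k] Module.Dual k A) (h : Module.Dual k A) :
    A →ₗ[k] Module.Dual k A :=
  α.compr₂ (Module.Dual.eval k A 1) + (LinearMap.mul k A).compr₂ h

noncomputable def shear (β : A →ₗ[k] Module.Dual k A) : Ext k A ≃ₗ[k] Ext k A :=
  LinearEquiv.ofLinearMap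
    ((LinearMap.fst k A _).prod (LinearMap.snd k A _ + β ∘ₗ LinearMap.fst k A _))
    ((LinearMap.fst k A _).prod (LinearMap.snd k A _ - β ∘ₗ LinearMap.fst k A _))
    (LinearMap.ext fun _ => by simp) (LinearMap.ext fun _ => by simp)

variable (k A) [FiniteDimensional k A]

/-- The canonical pairing `(a, f) ↦ ((b, g) ↦ f(b) + g(a))` of `A × A*` with itself. -/
noncomputable def pairingEquiv : Ext k A ≃ₗ[k] Module.Dual k (Ext k A) :=
  (LinearEquiv.prodComm k A (Module.Dual k A) ≪≫ₗ
    (LinearEquiv.refl k (Module.Dual k A)).prodCongr (Module.evalEquiv k A)) ≪≫ₗ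
    Module.dualProdDualEquivDual k A (Module.Dual k A)

variable {k A}

noncomputable def symmetrizingEquiv (α : A →ₗ[k] A →ₗ[k] Module.Dual k A)
    (h : Module.Dual k A) : Ext k A ≃ₗ[k] Module.Dual k (Ext k A) :=
  shear (shearMap α h) ≪≫ₗ pairingEquiv k A

theorem symmetrizingEquiv_apply (α : A →ₗ[k] A →ₗ[k] Module.Dual k A) (h : Module.Dual k A)
    (x u : Ext k A) :
    symmetrizingEquiv α h x u = symmetrizingForm h (hmul k A α x u) := by
  obtain ⟨a, f⟩ := x
  obtain ⟨b, g⟩ := u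
  rw [symmetrizingForm_hmul]
  simp [symmetrizingEquiv, pairingEquiv, shear, shearMap, Module.dualProdDualEquivDual,
    Module.evalEquiv_apply]
  ring

end SymmetrizingForm

/-- If there exists `h ∈ A*` with
`α(a⊗b)(1) − α(b⊗a)(1) + h(ab − ba) = 0` for all `a, b ∈ A` (the case `c = 1` of the
symmetry criterion), then `T(A,α)` is a symmetric algebra. -/
theorem symmetry_criterion_at_one
    (k : Type*) [Field k] (A : Type*) [Ring A] [Algebra k A] [FiniteDimensional k A]
    (α : A →ₗ[k] A →ₗ[k] Module.Dual k A) (hα : IsCocycle k A α)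
    (h : Module.Dual k A)
    (H : ∀ a b : A, α a b 1 - α b a 1 + h (a * b - b * a) = 0) :
    IsSymmetric k A α := by
  have hφ := symmetrizingEquiv_apply α h
  have hθ := symmetrizingForm_hmul_comm α h H
  have assoc := hmul_assoc α hα
  refine ⟨symmetrizingEquiv α h, fun x y u => ⟨?_, ?_⟩⟩
  · rw [hφ, hφ, assoc]
  · -- θ((yx)u) = θ(u(yx)) = θ((uy)x) = θ(x(uy))
    rw [hφ, hφ, hθ (hmul k A α y x) u, ← assoc, hθ (hmul k A α u y) x]

end HochschildExtension
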